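/- Let n ≥ 2 and 1 ≤ k ≤ n. If λ = (λ₁,…,λₙ) ∈ Γ_k, then for every index i ∈ {1,…,n} the (k−1)-th elementary symmetric function of the (n−1)-tuple obtained from λ by deleting the i-th entry is strictly positive: σ_{k−1}(λ₁,…,λ̂ᵢ,…,λₙ) > 0. -/

import Mathlib

/-- The `k`-th elementary symmetric function of `l = (l 0, …, l (n-1)) ∈ ℝⁿ`. -/
noncomputable def esymm (n k : ℕ) (l : Fin n → ℝ) : ℝ :=
  ∑ s ∈ Finset.powersetCard k (Finset.univ : Finset (Fin n)), ∏ i ∈ s, l i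

/-- The `k`-th elementary symmetric function of the `(n-1)`-tuple obtained from
`l ∈ ℝⁿ` by deleting the `i`-th entry. -/
noncomputable def esymmDel (n k : ℕ) (l : Fin n → ℝ) (i : Fin n) : ℝ :=
  ∑ s ∈ Finset.powersetCard k ((Finset.univ : Finset (Fin n)).erase i), ∏ j ∈ s, l j

/-- The Gårding cone `Γ_k ⊆ ℝⁿ`: the connected component of `{λ : σ_k(λ) > 0}`
containing the vector `(1,…,1)`. -/
noncomputable def gardingCone (n k : ℕ) : Set (Fin n → ℝ) :=
  connectedComponentIn {l : Fin n → ℝ | 0 < esymm n k l} (fun _ => 1)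

/-!
`Γ_k` lies in the set where `σ_0, …, σ_k` are all positive. That set is open, and it is closed
inside `{σ_k > 0}`: if `σ_0, …, σ_k ≥ 0` and `σ_k > 0`, then the `(n - k)`-th derivative of
`∏ (X + λ_i)`, which is real-rooted by Rolle and has coefficients proportional to
`σ_k, …, σ_0`, has nonnegative coefficients and positive constant term, so all its roots are
negative and all its coefficients positive.

Since `σ_k` is affine in `λ_i` with slope `σ_{k-1}(λ without λ_i)`, a nonpositive slope would
let `λ_i` decrease to `-∞` inside `{σ_k > 0}`, hence inside `Γ_k`, while `σ_1` becomes zero.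
-/

open Polynomial

namespace Multiset

theorem esymm_cons_succ {R : Type*} [CommSemiring R] (a : R) (s : Multiset R) (k : ℕ) :
    (a ::ₘ s).esymm (k + 1) = a * s.esymm k + s.esymm (k + 1) := by
  simp [esymm, powersetCard_cons, sum_map_mul_left, add_comm]

theorem esymm_pos {s : Multiset ℝ} (hs : ∀ a ∈ s, 0 < a) {k : ℕ} (hk : k ≤ card s) :
    0 < s.esymm k := by
  have hne : powersetCard k s ≠ ∅ := by
    rw [empty_eq_zero, ← card_pos, card_powersetCard]
    exact Nat.choose_pos hk
  simpa [esymm] using sum_lt_sum_of_nonempty (f := fun _ => (0 : ℝ)) hne fun t ht =>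
    prod_pos fun a ha => hs a (mem_of_le (mem_powersetCard.mp ht).1 ha)

theorem natDegree_prod_X_add_C {R : Type*} [CommRing R] [Nontrivial R] (s : Multiset R) :
    (s.map fun a => X + C a).prod.natDegree = card s := by
  rw [natDegree_multiset_prod_of_monic _ (by simpa using fun a _ => monic_X_add_C a)]
  simp

theorem coeff_iterate_derivative_prod_X_add_C {R : Type*} [CommSemiring R] {s : Multiset R}
    {k m : ℕ} (hk : k ≤ card s) (hm : m ≤ k) :
    (derivative^[card s - k] (s.map fun a => X + C a).prod).coeff m
      = ((m + (card s - k)).descFactorial (card s - k) : R) * s.esymm (k - m) := by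
  rw [coeff_iterate_derivative, nsmul_eq_mul, prod_X_add_C_coeff s (by omega)]
  congr 2
  omega

end Multiset

namespace Polynomial

theorem Splits.derivative_of_real {q : ℝ[X]} (hq : q.Splits) : (derivative q).Splits := by
  rw [splits_iff_card_roots] at hq ⊢
  have := card_roots_le_derivative q
  have := natDegree_derivative_le q
  have := card_roots' (derivative q)
  omega

theorem Splits.iterate_derivative_of_real {q : ℝ[X]} (hq : q.Splits) (m : ℕ) :
    (derivative^[m] q).Splits := by
  induction m with
  | zero => exact hq
  | succ m ih => exact Function.iterate_succ_apply' derivative m q ▸ ih.derivative_of_real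

theorem coeff_pos_of_splits {p : ℝ[X]} (hp : p.Splits) (hcoeff : ∀ m, 0 ≤ p.coeff m)
    (h0 : 0 < p.coeff 0) {m : ℕ} (hm : m ≤ p.natDegree) : 0 < p.coeff m := by
  have hroots : ∀ r ∈ p.roots, r < 0 := by
    intro r hr
    by_contra! hr0
    have : 0 < p.eval r := by
      rw [eval_eq_sum_range]
      exact Finset.sum_pos' (fun i _ => mul_nonneg (hcoeff i) (pow_nonneg hr0 i))
        ⟨0, by simp, by simpa using h0⟩
    exact this.ne' (isRoot_of_mem_roots hr)
  have hlc : 0 < p.leadingCoeff :=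
    (hcoeff _).lt_of_ne (leadingCoeff_ne_zero.mpr fun h => by simp [h] at h0).symm
  rw [coeff_eq_esymm_roots_of_splits hp hm, mul_assoc, ← Multiset.esymm_neg]
  refine mul_pos hlc (Multiset.esymm_pos ?_ ?_)
  · simpa only [Multiset.mem_map, forall_exists_index, and_imp, forall_apply_eq_imp_iff₂,
      neg_pos] using hroots
  · rw [Multiset.card_map, splits_iff_card_roots.mp hp]
    omega

end Polynomial

namespace Multiset

theorem esymm_pos_of_esymm_nonneg {s : Multiset ℝ} {k : ℕ} (hk : k ≤ card s)
    (hnonneg : ∀ j ≤ k, 0 ≤ s.esymm j) (hpos : 0 < s.esymm k) {j : ℕ} (hj : j ≤ k) :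
    0 < s.esymm j := by
  set p := derivative^[card s - k] (s.map fun a => X + C a).prod
  have hcoeff : ∀ m ≤ k, p.coeff m
      = ((m + (card s - k)).descFactorial (card s - k) : ℝ) * s.esymm (k - m) :=
    fun m hm => coeff_iterate_derivative_prod_X_add_C hk hm
  have hdesc : ∀ m, (0 : ℝ) < (m + (card s - k)).descFactorial (card s - k) :=
    fun m => by exact_mod_cast Nat.descFactorial_pos.mpr (by omega)
  have hdeg : p.natDegree = k := by
    refine le_antisymm ?_ (le_natDegree_of_ne_zero ?_)
    · have : p.natDegree ≤ _ := natDegree_iterate_derivative _ (card s - k)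
      rw [natDegree_prod_X_add_C] at this
      omega
    · simp [hcoeff k le_rfl, esymm, (hdesc k).ne']
  have hsplits : p.Splits :=
    (Splits.multisetProd (by simp [Splits.X_add_C])).iterate_derivative_of_real _
  have hnonneg_coeff : ∀ m, 0 ≤ p.coeff m := by
    intro m
    rcases le_or_gt m k with hm | hm
    · rw [hcoeff m hm]
      exact mul_nonneg (hdesc m).le (hnonneg _ (by omega))
    · rw [coeff_eq_zero_of_natDegree_lt (hdeg ▸ hm)]
  have hpos_coeff_zero : 0 < p.coeff 0 := by
    simpa [hcoeff 0 (Nat.zero_le k)] using mul_pos (hdesc 0) hpos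
  have hp := coeff_pos_of_splits hsplits hnonneg_coeff hpos_coeff_zero (m := k - j) (by omega)
  rw [hcoeff _ (by omega), Nat.sub_sub_self hj] at hp
  exact pos_of_mul_pos_right hp (hdesc _).le

end Multiset

section GardingCone

open Finset Function

variable {n : ℕ}

theorem esymm_eq_multiset_esymm (k : ℕ) (l : Fin n → ℝ) :
    esymm n k l = (univ.val.map l).esymm k :=
  (esymm_map_val l univ k).symm

theorem esymmDel_eq_multiset_esymm (k : ℕ) (l : Fin n → ℝ) (i : Fin n) :
    esymmDel n k l i = ((univ.erase i).val.map l).esymm k :=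
  (esymm_map_val l (univ.erase i) k).symm

@[simp]
theorem esymmDel_zero (l : Fin n → ℝ) (i : Fin n) : esymmDel n 0 l i = 1 := by
  simp [esymmDel]

theorem esymm_update (k : ℕ) (l : Fin n → ℝ) (i : Fin n) (x : ℝ) :
    esymm n (k + 1) (update l i x) = x * esymmDel n k l i + esymmDel n (k + 1) l i := by
  have hmap : ((univ.erase i).val.map (update l i x)) = (univ.erase i).val.map l :=
    Multiset.map_congr rfl fun j hj => update_of_ne (ne_of_mem_erase (mem_def.mpr hj)) x l
  rw [esymm_eq_multiset_esymm, ← Multiset.cons_erase (mem_univ_val i), ← erase_val,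
    Multiset.map_cons, update_self, hmap, Multiset.esymm_cons_succ,
    esymmDel_eq_multiset_esymm, esymmDel_eq_multiset_esymm]

theorem esymm_const_one (k : ℕ) : esymm n k (fun _ => 1) = n.choose k := by
  simp [esymm, card_powersetCard]

theorem continuous_esymm (k : ℕ) : Continuous (esymm n k) := by
  unfold esymm
  fun_prop

def esymmPosUpTo (n k : ℕ) : Set (Fin n → ℝ) := {l | ∀ j ≤ k, 0 < esymm n j l}

theorem isOpen_esymmPosUpTo (k : ℕ) : IsOpen (esymmPosUpTo n k) := by
  have : esymmPosUpTo n k = ⋂ j ∈ Set.Iic k, {l | 0 < esymm n j l} := by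
    ext; simp [esymmPosUpTo]
  rw [this]
  exact (Set.finite_Iic k).isOpen_biInter fun j _ =>
    isOpen_lt continuous_const (continuous_esymm j)

theorem closure_esymmPosUpTo_subset (k : ℕ) :
    closure (esymmPosUpTo n k) ⊆ {l | ∀ j ≤ k, 0 ≤ esymm n j l} := by
  refine closure_minimal (fun l hl j hj => (hl j hj).le) ?_
  have : {l : Fin n → ℝ | ∀ j ≤ k, 0 ≤ esymm n j l}
      = ⋂ j ∈ Set.Iic k, {l | 0 ≤ esymm n j l} := by
    ext; simp
  rw [this]
  exact isClosed_biInter fun j _ => isClosed_le continuous_const (continuous_esymm j)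

theorem gardingCone_subset_esymmPosUpTo {k : ℕ} (hk : k ≤ n) :
    gardingCone n k ⊆ esymmPosUpTo n k := by
  have hone : (fun _ => 1) ∈ esymmPosUpTo n k := fun j hj => by
    rw [esymm_const_one]
    exact_mod_cast Nat.choose_pos (hj.trans hk)
  refine isPreconnected_connectedComponentIn.subset_of_closure_inter_subset
    (isOpen_esymmPosUpTo k) ⟨_, mem_connectedComponentIn (hone k le_rfl), hone⟩ ?_
  rintro l ⟨hcl, hl⟩ j hj
  have hnonneg := closure_esymmPosUpTo_subset k hcl
  have hpos : l ∈ {l | 0 < esymm n k l} := connectedComponentIn_subset _ _ hl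
  simp only [Set.mem_ofPred_eq, esymm_eq_multiset_esymm] at hnonneg hpos ⊢
  exact Multiset.esymm_pos_of_esymm_nonneg (by simpa using hk) hnonneg hpos hj

theorem update_mem_gardingCone {k : ℕ} {l : Fin n → ℝ} (hl : l ∈ gardingCone n (k + 1))
    {i : Fin n} (hD : esymmDel n k l i ≤ 0) {x : ℝ} (hx : x ≤ l i) :
    update l i x ∈ gardingCone n (k + 1) := by
  have hcont : Continuous (update l i) := continuous_const.update i continuous_id
  have hS : IsPreconnected (update l i '' Set.Icc x (l i)) :=
    isPreconnected_Icc.image _ hcont.continuousOn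
  have hSF : update l i '' Set.Icc x (l i) ⊆ {l | 0 < esymm n (k + 1) l} := by
    rintro _ ⟨y, hy, rfl⟩
    have hl' : update l i (l i) ∈ {l | 0 < esymm n (k + 1) l} := by
      rw [update_eq_self]
      exact connectedComponentIn_subset _ _ hl
    simp only [Set.mem_ofPred_eq, esymm_update] at hl' ⊢
    nlinarith [hy.2]
  rw [gardingCone, connectedComponentIn_eq hl]
  exact hS.subset_connectedComponentIn ⟨l i, ⟨hx, le_rfl⟩, update_eq_self i l⟩ hSF
    ⟨x, ⟨le_rfl, hx⟩, rfl⟩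

end GardingCone

theorem esymmDel_pos_of_mem_gardingCone_general (n k : ℕ) (hk1 : 1 ≤ k) (hk : k ≤ n)
    (l : Fin n → ℝ) (hl : l ∈ gardingCone n k) (i : Fin n) :
    0 < esymmDel n (k - 1) l i := by
  obtain ⟨k, rfl⟩ := Nat.exists_eq_add_of_le' hk1
  rw [Nat.add_sub_cancel]
  by_contra! hD
  have hσ₁ : ∀ x, esymm n 1 (Function.update l i x) = x + esymmDel n 1 l i := by
    simp [esymm_update]
  have hσ₁l := gardingCone_subset_esymmPosUpTo hk hl 1 hk1
  rw [← Function.update_eq_self i l, hσ₁] at hσ₁l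
  have hσ₁μ := gardingCone_subset_esymmPosUpTo hk
    (update_mem_gardingCone hl hD (x := -esymmDel n 1 l i) (by linarith)) 1 hk1
  simp [hσ₁] at hσ₁μ

/-- For `λ ∈ Γ_k` and every index `i`, the `(k-1)`-th elementary symmetric function
of the tuple obtained by deleting the `i`-th entry of `λ` is strictly positive. -/
theorem esymmDel_pos_of_mem_gardingCone (n k : ℕ) (hn : 2 ≤ n) (hk1 : 1 ≤ k) (hk : k ≤ n)
    (l : Fin n → ℝ) (hl : l ∈ gardingCone n k) (i : Fin n) :
    0 < esymmDel n (k - 1) l i :=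
  esymmDel_pos_of_mem_gardingCone_general n k hk1 hk l hl i
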